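/- arXiv:2504.08097 — 3 statements merged into one kernel-verified Lean document; each statement's English description precedes it below -/
import Mathlib

section
/- Let p ∈ [1,∞), let P be a Borel probability measure on ℝ^d with finite p-th moment, let S¹,…,S^K be a Borel partition of ℝ^d with P(S^k) > 0 for every k, and let (uᵢ)_{i≥1} be i.i.d. with law P. Then almost surely W_p(P̂^K_n, P^K_⋆) → 0 as n → ∞, where P̂^K_n is the clustered empirical distribution at sample size n and P^K_⋆ = Σ_k P(S^k) δ_{ū^k_⋆} with ū^k_⋆ the conditional mean of P on S^k. -/
open MeasureTheory ENNReal Filter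
open Topology

noncomputable section

abbrev Euc (d : ℕ) := EuclideanSpace ℝ (Fin d)

/-- A coupling of two Borel probability measures on `ℝ^d`. -/
def IsCoupling {d : ℕ} (π : Measure (Euc d × Euc d)) (μ ν : Measure (Euc d)) : Prop :=
  IsProbabilityMeasure π ∧ π.map Prod.fst = μ ∧ π.map Prod.snd = ν

/-- The Wasserstein-`p` distance (Euclidean norm cost) between measures on `ℝ^d`. -/
noncomputable def wassDist {d : ℕ} (p : ℝ) (μ ν : Measure (Euc d)) : ℝ :=
  (⨅ π : {π : Measure (Euc d × Euc d) // IsCoupling π μ ν},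
      (∫⁻ w, ENNReal.ofReal (‖w.1 - w.2‖ ^ p) ∂(π.1)) ^ (1 / p)).toReal

/-- Finite `p`-th moment. -/
def HasFiniteMoment {d : ℕ} (p : ℝ) (μ : Measure (Euc d)) : Prop :=
  ∫⁻ u, ENNReal.ofReal (‖u‖ ^ p) ∂μ < ⊤

attribute [local instance] Classical.propDecidable

/-- Sample mean of those of the first `n` samples that fall in the set `s`
(equal to `0` if no sample falls in `s`). -/
noncomputable def clusterSampleMean {d : ℕ} {Ω : Type*} (u : ℕ → Ω → Euc d)
    (s : Set (Euc d)) (n : ℕ) (ω : Ω) : Euc d :=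
  ((((Finset.range n).filter (fun i => u i ω ∈ s)).card : ℝ)⁻¹ •
    ∑ i ∈ (Finset.range n).filter (fun i => u i ω ∈ s), u i ω : Euc d)

/-- The clustered empirical distribution at sample size `n` induced by the
partition `S` : clusters get weight equal to the empirical frequency of `S k`,
placed at the within-cluster sample mean. -/
noncomputable def clusteredEmp {d K : ℕ} {Ω : Type*} (S : Fin K → Set (Euc d))
    (u : ℕ → Ω → Euc d) (n : ℕ) (ω : Ω) : Measure (Euc d) :=
  ∑ k, ((((Finset.range n).filter (fun i => u i ω ∈ S k)).card : ℝ≥0∞) / (n : ℝ≥0∞)) •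
    Measure.dirac (clusterSampleMean u (S k) n ω)

/-- Conditional mean of `P` on a set `s`. -/
noncomputable def condMean {d : ℕ} (P : Measure (Euc d)) (s : Set (Euc d)) : Euc d :=
  ((P s).toReal)⁻¹ • ∫ x in s, x ∂P

/-- The limiting clustered distribution `P^K_⋆ = Σ_k P(S^k) δ_{ū^k_⋆}`. -/
noncomputable def limitClustered {d K : ℕ} (P : Measure (Euc d)) (S : Fin K → Set (Euc d)) :
    Measure (Euc d) :=
  ∑ k, (P (S k)) • Measure.dirac (condMean P (S k))

lemma measure_map_finset_sum {α β ι : Type*} [MeasurableSpace α] [MeasurableSpace β]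
    (s : Finset ι) (μ : ι → Measure α) {f : α → β} (hf : Measurable f) :
    (∑ i ∈ s, μ i).map f = ∑ i ∈ s, (μ i).map f := by
  induction s using Finset.cons_induction with
  | empty => simp
  | cons i s hi ih => rw [Finset.sum_cons, Finset.sum_cons, Measure.map_add _ _ hf, ih]

lemma exists_coupling {d K : ℕ} (p : ℝ) (a b : Fin K → Euc d) (θ q : Fin K → ℝ≥0∞)
    (hθ : ∑ k, θ k = 1) (hq : ∑ k, q k = 1) :
    ∃ π : Measure (Euc d × Euc d), IsCoupling π (∑ k, θ k • Measure.dirac (a k))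
      (∑ k, q k • Measure.dirac (b k)) ∧
      (∫⁻ w, ENNReal.ofReal (‖w.1 - w.2‖ ^ p) ∂π) ≤
        (∑ k, θ k * ENNReal.ofReal (‖a k - b k‖ ^ p)) +
        (∑ k, (q k - θ k)) * ∑ k, ∑ l, ENNReal.ofReal (‖a k - b l‖ ^ p) := by
  classical
  set r : Fin K → ℝ≥0∞ := fun k => θ k - q k with hr
  set s : Fin K → ℝ≥0∞ := fun k => q k - θ k with hs
  set m : ℝ≥0∞ := ∑ k, s k with hm
  have hmle : m ≤ 1 := by
    rw [hm, ← hq]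
    exact Finset.sum_le_sum fun k _ => tsub_le_self
  have hmtop : m ≠ ⊤ := (hmle.trans_lt one_lt_top).ne
  have hmintop : (∑ k, min (θ k) (q k)) ≠ ⊤ := by
    refine ((Finset.sum_le_sum fun k (_ : k ∈ Finset.univ) =>
      min_le_right (θ k) (q k)).trans_lt ?_).ne
    rw [hq]; exact one_lt_top
  have hrm : ∑ k, r k = m := by
    have e1 : ∑ k, r k + ∑ k, min (θ k) (q k) = 1 := by
      rw [← Finset.sum_add_distrib]
      simp only [hr, tsub_add_min]
      exact hθ
    have e2 : m + ∑ k, min (θ k) (q k) = 1 := by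
      rw [hm, ← Finset.sum_add_distrib]
      have : ∀ k : Fin K, s k + min (θ k) (q k) = q k := by
        intro k; rw [min_comm]; exact tsub_add_min
      simp only [this]
      exact hq
    exact WithTop.add_right_cancel hmintop (e1.trans e2.symm)
  have hrk : ∀ k, r k ≤ m := fun k =>
    hrm ▸ Finset.single_le_sum (fun k _ => (zero_le : 0 ≤ r k)) (Finset.mem_univ k)
  have hsk : ∀ k, s k ≤ m := fun k =>
    Finset.single_le_sum (fun k _ => (zero_le : 0 ≤ s k)) (Finset.mem_univ k)
  have hinv : ∀ x : ℝ≥0∞, x ≤ m → m⁻¹ * (x * m) = x := by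
    intro x hx
    rcases eq_or_ne m 0 with h0 | h0
    · have : x = 0 := le_antisymm (h0 ▸ hx) zero_le
      simp [this]
    · rw [mul_comm x m, ← mul_assoc, ENNReal.inv_mul_cancel h0 hmtop, one_mul]
  set π : Measure (Euc d × Euc d) :=
    (∑ k, min (θ k) (q k) • Measure.dirac (a k, b k)) +
      ∑ k, ∑ l, (m⁻¹ * (r k * s l)) • Measure.dirac (a k, b l) with hπ
  have hfst : π.map Prod.fst = ∑ k, θ k • Measure.dirac (a k) := by
    rw [hπ, Measure.map_add _ _ measurable_fst, measure_map_finset_sum _ _ measurable_fst,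
      measure_map_finset_sum _ _ measurable_fst]
    simp only [Measure.map_smul, Measure.map_dirac' measurable_fst]
    rw [← Finset.sum_add_distrib]
    refine Finset.sum_congr rfl fun k _ => ?_
    rw [measure_map_finset_sum _ _ measurable_fst]
    simp only [Measure.map_smul, Measure.map_dirac' measurable_fst]
    rw [← Finset.sum_smul, ← add_smul]
    congr 1
    have : ∑ l, m⁻¹ * (r k * s l) = m⁻¹ * (r k * m) := by
      rw [← Finset.mul_sum, ← Finset.mul_sum]
    rw [this, hinv _ (hrk k)]
    rw [add_comm]
    exact hr ▸ tsub_add_min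
  have hsnd : π.map Prod.snd = ∑ k, q k • Measure.dirac (b k) := by
    rw [hπ, Measure.map_add _ _ measurable_snd, measure_map_finset_sum _ _ measurable_snd]
    simp only [measure_map_finset_sum _ _ measurable_snd, Measure.map_smul,
      Measure.map_dirac' measurable_snd]
    rw [Finset.sum_comm, ← Finset.sum_add_distrib]
    refine Finset.sum_congr rfl fun l _ => ?_
    rw [← Finset.sum_smul, ← add_smul]
    congr 1
    have : ∑ k, m⁻¹ * (r k * s l) = m⁻¹ * (s l * m) := by
      rw [← Finset.mul_sum, ← Finset.sum_mul, hrm, mul_comm m (s l)]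
    rw [this, hinv _ (hsk l), add_comm, min_comm]
    exact hs ▸ tsub_add_min
  have hprob : IsProbabilityMeasure π := by
    constructor
    have : π Set.univ = (π.map Prod.fst) Set.univ := by
      rw [Measure.map_apply measurable_fst MeasurableSet.univ, Set.preimage_univ]
    rw [this, hfst]
    simp only [Measure.finset_sum_apply, Measure.smul_apply,
      Measure.dirac_apply' _ MeasurableSet.univ, Set.indicator_univ, Pi.one_apply,
      smul_eq_mul, mul_one]
    exact hθ
  refine ⟨π, ⟨hprob, hfst, hsnd⟩, ?_⟩
  have hFmeas : Measurable fun w : Euc d × Euc d => ENNReal.ofReal (‖w.1 - w.2‖ ^ p) := by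
    apply ENNReal.measurable_ofReal.comp
    exact ((measurable_fst.sub measurable_snd).norm).pow_const p
  rw [hπ, lintegral_add_measure, lintegral_finset_sum_measure, lintegral_finset_sum_measure]
  simp only [lintegral_smul_measure, lintegral_finset_sum_measure,
    lintegral_dirac' _ hFmeas, smul_eq_mul]
  refine add_le_add (Finset.sum_le_sum fun k _ => ?_) ?_
  · gcongr
    exact min_le_left _ _
  · rw [Finset.mul_sum]
    refine Finset.sum_le_sum fun k _ => ?_
    rw [Finset.mul_sum]
    refine Finset.sum_le_sum fun l _ => ?_
    have h1 : m⁻¹ * (r k * s l) ≤ m := by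
      calc m⁻¹ * (r k * s l) ≤ m⁻¹ * (m * s l) := by gcongr; exact hrk k
        _ = m⁻¹ * (s l * m) := by rw [mul_comm m (s l)]
        _ = s l := hinv _ (hsk l)
        _ ≤ m := hsk l
    gcongr

lemma wassDist_le_of_coupling {d : ℕ} {p : ℝ} (hp : 0 < p) {μ ν : Measure (Euc d)} {B : ℝ≥0∞}
    (hB : B ≠ ⊤) {π : Measure (Euc d × Euc d)} (hπ : IsCoupling π μ ν)
    (hc : ∫⁻ w, ENNReal.ofReal (‖w.1 - w.2‖ ^ p) ∂π ≤ B) :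
    wassDist p μ ν ≤ (B ^ (1 / p)).toReal := by
  refine ENNReal.toReal_mono (ENNReal.rpow_ne_top_of_nonneg (by positivity) hB) ?_
  exact le_trans (iInf_le _ (⟨π, hπ⟩ : {π // IsCoupling π μ ν}))
    (ENNReal.rpow_le_rpow hc (by positivity))

lemma integrable_id_of_moment {d : ℕ} {p : ℝ} (hp : 1 ≤ p) {P : Measure (Euc d)}
    [IsProbabilityMeasure P] (hmom : HasFiniteMoment p P) :
    Integrable (fun x : Euc d => x) P := by
  refine ⟨measurable_id.aestronglyMeasurable, ?_⟩
  have hb : ∀ x : Euc d, (‖x‖₊ : ℝ≥0∞) ≤ 1 + ENNReal.ofReal (‖x‖ ^ p) := by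
    intro x
    rw [show (‖x‖₊ : ℝ≥0∞) = ENNReal.ofReal ‖x‖ from (ofReal_norm x).symm]
    rcases le_total ‖x‖ 1 with h | h
    · exact (ENNReal.ofReal_le_one.2 h).trans le_self_add
    · refine le_trans (ENNReal.ofReal_le_ofReal ?_) le_add_self
      calc ‖x‖ = ‖x‖ ^ (1 : ℝ) := (Real.rpow_one _).symm
        _ ≤ ‖x‖ ^ p := Real.rpow_le_rpow_of_exponent_le h hp
  have key : ∫⁻ x, (‖x‖₊ : ℝ≥0∞) ∂P < ⊤ := by
    calc ∫⁻ x, (‖x‖₊ : ℝ≥0∞) ∂P ≤ ∫⁻ x, (1 + ENNReal.ofReal (‖x‖ ^ p)) ∂P :=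
          lintegral_mono hb
      _ = 1 + ∫⁻ x, ENNReal.ofReal (‖x‖ ^ p) ∂P := by
          rw [lintegral_add_left measurable_const, lintegral_one, measure_univ]
      _ < ⊤ := ENNReal.add_lt_top.2 ⟨one_lt_top, hmom⟩
  exact key

lemma slln_comp {Ω : Type*} [MeasurableSpace Ω] {Pr : Measure Ω} [IsProbabilityMeasure Pr]
    {d : ℕ} {E : Type*} [NormedAddCommGroup E] [NormedSpace ℝ E] [CompleteSpace E]
    [MeasurableSpace E] [BorelSpace E] [SecondCountableTopology E]
    {P : Measure (Euc d)} (u : ℕ → Ω → Euc d) (hmeas : ∀ i, Measurable (u i))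
    (hindep : ProbabilityTheory.iIndepFun u Pr)
    (hlaw : ∀ i, Measure.map (u i) Pr = P)
    (f : Euc d → E) (hf : Measurable f) (hfint : Integrable f P) :
    ∀ᵐ ω ∂Pr, Tendsto (fun n : ℕ => (n : ℝ)⁻¹ • ∑ i ∈ Finset.range n, f (u i ω))
      atTop (𝓝 (∫ x, f x ∂P)) := by
  have hident : ∀ i, ProbabilityTheory.IdentDistrib (f ∘ u i) (f ∘ u 0) Pr Pr := fun i =>
    (ProbabilityTheory.IdentDistrib.comp
      ⟨(hmeas i).aemeasurable, (hmeas 0).aemeasurable, by rw [hlaw i, hlaw 0]⟩ hf)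
  have hint : Integrable (f ∘ u 0) Pr := by
    have h0 : Integrable f (Measure.map (u 0) Pr) := by rw [hlaw 0]; exact hfint
    exact (integrable_map_measure hf.aestronglyMeasurable (hmeas 0).aemeasurable).mp h0
  have hpind : Pairwise (Function.onFun (ProbabilityTheory.IndepFun · · Pr) fun i => f ∘ u i) :=
    fun i j hij => (hindep.indepFun hij).comp hf hf
  have hsl := ProbabilityTheory.strong_law_ae (μ := Pr) (fun i => f ∘ u i) hint hpind hident
  have hlim : (∫ ω, (f ∘ u 0) ω ∂Pr) = ∫ x, f x ∂P := by
    rw [← hlaw 0, integral_map (hmeas 0).aemeasurable hf.aestronglyMeasurable]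
    rfl
  rw [hlim] at hsl
  exact hsl

lemma sum_card_filter {d K : ℕ} {Ω : Type*} (S : Fin K → Set (Euc d))
    (hdisj : ∀ k l : Fin K, k ≠ l → Disjoint (S k) (S l))
    (hcover : (⋃ k, S k) = Set.univ)
    (u : ℕ → Ω → Euc d) (ω : Ω) (n : ℕ) :
    ∑ k, ((Finset.range n).filter (fun i => u i ω ∈ S k)).card = n := by
  have h1 : ∀ i : ℕ, ∑ k : Fin K, (if u i ω ∈ S k then 1 else 0) = 1 := by
    intro i
    have hx : u i ω ∈ ⋃ k, S k := hcover ▸ Set.mem_univ _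
    obtain ⟨k0, hk0⟩ := Set.mem_iUnion.1 hx
    rw [Finset.sum_eq_single k0]
    · rw [if_pos hk0]
    · intro l _ hl
      simp only [ite_eq_right_iff]
      intro hl'
      exact absurd hk0 (Set.disjoint_left.1 (hdisj l k0 hl) hl')
    · intro h; exact absurd (Finset.mem_univ k0) h
  calc ∑ k, ((Finset.range n).filter (fun i => u i ω ∈ S k)).card
      = ∑ k : Fin K, ∑ i ∈ Finset.range n, (if u i ω ∈ S k then 1 else 0) := by
        exact Finset.sum_congr rfl fun k _ => Finset.card_filter _ _
    _ = ∑ i ∈ Finset.range n, ∑ k : Fin K, (if u i ω ∈ S k then 1 else 0) := Finset.sum_comm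
    _ = ∑ i ∈ Finset.range n, 1 := by simp only [h1]
    _ = n := by simp

/-- almost surely, the clustered empirical distribution converges in
Wasserstein-`p` distance to the limit distribution `P^K_⋆`. -/
theorem stmt3 {d K : ℕ} {Ω : Type*} [MeasurableSpace Ω] (Pr : Measure Ω) [IsProbabilityMeasure Pr]
    (p : ℝ) (hp : 1 ≤ p) (P : Measure (Euc d)) [IsProbabilityMeasure P]
    (hmom : HasFiniteMoment p P)
    (S : Fin K → Set (Euc d)) (hSmeas : ∀ k, MeasurableSet (S k))
    (hdisj : ∀ k l : Fin K, k ≠ l → Disjoint (S k) (S l))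
    (hcover : (⋃ k, S k) = Set.univ)
    (hpos : ∀ k, 0 < P (S k))
    (u : ℕ → Ω → Euc d) (hmeas : ∀ i, Measurable (u i))
    (hindep : ProbabilityTheory.iIndepFun u Pr)
    (hlaw : ∀ i, Measure.map (u i) Pr = P) :
    ∀ᵐ ω ∂Pr,
      Tendsto (fun n : ℕ => wassDist p (clusteredEmp S u n ω) (limitClustered P S))
        atTop (nhds 0) := by

  classical
  have hp0 : (0 : ℝ) < p := lt_of_lt_of_le one_pos hp
  have hqtop : ∀ k, P (S k) ≠ ⊤ := fun k => measure_ne_top P (S k)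
  have hq1 : ∑ k, P (S k) = 1 := by
    have hd : Pairwise (Function.onFun Disjoint S) := fun k l h => hdisj k l h
    have hU := measure_iUnion hd hSmeas (μ := P)
    rw [hcover, measure_univ, tsum_fintype] at hU
    exact hU.symm
  have hqrpos : ∀ k, 0 < (P (S k)).toReal := fun k =>
    ENNReal.toReal_pos (hpos k).ne' (hqtop k)
  have hid : Integrable (fun x : Euc d => x) P := integrable_id_of_moment hp hmom
  have hA : ∀ k, ∀ᵐ ω ∂Pr, Tendsto (fun n : ℕ => (n : ℝ)⁻¹ •
      ∑ i ∈ Finset.range n, (S k).indicator (fun _ => (1 : ℝ)) (u i ω)) atTop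
      (𝓝 ((P (S k)).toReal)) := by
    intro k
    have hmf : Measurable ((S k).indicator (fun _ => (1 : ℝ))) :=
      measurable_const.indicator (hSmeas k)
    have hint : Integrable ((S k).indicator (fun _ => (1 : ℝ))) P :=
      (integrable_const (1 : ℝ)).indicator (hSmeas k)
    have h := slln_comp u hmeas hindep hlaw _ hmf hint
    have heq : ∫ x, (S k).indicator (fun _ => (1 : ℝ)) x ∂P = (P (S k)).toReal := by
      rw [integral_indicator_const (1 : ℝ) (hSmeas k), smul_eq_mul, mul_one]
      rfl
    rwa [heq] at h
  have hB : ∀ k, ∀ᵐ ω ∂Pr, Tendsto (fun n : ℕ => (n : ℝ)⁻¹ •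
      ∑ i ∈ Finset.range n, (S k).indicator id (u i ω)) atTop
      (𝓝 (∫ x in S k, x ∂P)) := by
    intro k
    have hmf : Measurable ((S k).indicator (id : Euc d → Euc d)) :=
      measurable_id.indicator (hSmeas k)
    have hint : Integrable ((S k).indicator (id : Euc d → Euc d)) P :=
      hid.indicator (hSmeas k)
    have h := slln_comp u hmeas hindep hlaw _ hmf hint
    have heq : ∫ x, (S k).indicator id x ∂P = ∫ x in S k, x ∂P :=
      integral_indicator (hSmeas k)
    rwa [heq] at h
  filter_upwards [ae_all_iff.2 hA, ae_all_iff.2 hB] with ω hAω hBω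
  -- empirical frequencies converge
  have key : ∀ k, Tendsto (fun n : ℕ =>
      ((((Finset.range n).filter (fun i => u i ω ∈ S k)).card : ℝ) / n)) atTop
      (𝓝 ((P (S k)).toReal)) := by
    intro k
    refine (hAω k).congr fun n => ?_
    have hsum : ∑ i ∈ Finset.range n, (S k).indicator (fun _ => (1 : ℝ)) (u i ω)
        = (((Finset.range n).filter (fun i => u i ω ∈ S k)).card : ℝ) := by
      simp only [Set.indicator_apply]
      rw [Finset.sum_boole]
    rw [hsum, smul_eq_mul, ← div_eq_inv_mul]
  -- cluster sample means converge
  have haK : ∀ k, Tendsto (fun n => clusterSampleMean u (S k) n ω) atTop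
      (𝓝 (condMean P (S k))) := by
    intro k
    have hq0 : (P (S k)).toReal ≠ 0 := (hqrpos k).ne'
    have hv : Tendsto (fun n : ℕ =>
        ((((Finset.range n).filter (fun i => u i ω ∈ S k)).card : ℝ) / n)⁻¹ •
        ((n : ℝ)⁻¹ • ∑ i ∈ Finset.range n, (S k).indicator id (u i ω))) atTop
        (𝓝 (((P (S k)).toReal)⁻¹ • ∫ x in S k, x ∂P)) :=
      ((key k).inv₀ hq0).smul (hBω k)
    refine hv.congr' ?_
    filter_upwards [(key k).eventually (eventually_gt_nhds (half_lt_self (hqrpos k))),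
      eventually_ge_atTop 1] with n hn hn1
    have hn0 : (n : ℝ) ≠ 0 := Nat.cast_ne_zero.2 (by omega)
    have htpos : (0 : ℝ) <
        (((Finset.range n).filter (fun i => u i ω ∈ S k)).card : ℝ) / n :=
      lt_trans (by positivity) hn
    have hc0 : ((((Finset.range n).filter (fun i => u i ω ∈ S k)).card : ℝ)) ≠ 0 := by
      intro h
      rw [h, zero_div] at htpos
      exact lt_irrefl _ htpos
    have hsum : ∑ i ∈ Finset.range n, (S k).indicator id (u i ω)
        = ∑ i ∈ (Finset.range n).filter (fun i => u i ω ∈ S k), u i ω := by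
      rw [Finset.sum_filter]
      simp only [Set.indicator_apply, id_eq]
    rw [smul_smul, hsum, clusterSampleMean]
    congr 1
    field_simp
  -- abbreviations
  set F : Euc d → Euc d → ℝ≥0∞ := fun x y => ENNReal.ofReal (‖x - y‖ ^ p) with hF
  set bb : Fin K → Euc d := fun k => condMean P (S k) with hbb
  set aa : Fin K → ℕ → Euc d := fun k n => clusterSampleMean u (S k) n ω with haa
  set θ : Fin K → ℕ → ℝ≥0∞ := fun k n =>
    ((((Finset.range n).filter (fun i => u i ω ∈ S k)).card : ℝ≥0∞) / (n : ℝ≥0∞)) with hθ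
  set Bnd : ℕ → ℝ≥0∞ := fun n => (∑ k, θ k n * F (aa k n) (bb k)) +
    (∑ k, (P (S k) - θ k n)) * ∑ k, ∑ l, F (aa k n) (bb l) with hBnd
  have hθtop : ∀ k, ∀ n : ℕ, 1 ≤ n → θ k n ≠ ⊤ := by
    intro k n hn
    exact (ENNReal.div_lt_top (natCast_ne_top _) (Nat.cast_ne_zero.2 (by omega))).ne
  have hof : ∀ k, ∀ᶠ n : ℕ in atTop, ENNReal.ofReal
      ((((Finset.range n).filter (fun i => u i ω ∈ S k)).card : ℝ) / n) = θ k n := by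
    intro k
    filter_upwards [eventually_ge_atTop 1] with n hn
    have hn0 : (0 : ℝ) < n := by exact_mod_cast Nat.pos_of_ne_zero (by omega)
    rw [ENNReal.ofReal_div_of_pos hn0, ENNReal.ofReal_natCast, ENNReal.ofReal_natCast]
  have hθt : ∀ k, Tendsto (fun n => θ k n) atTop (𝓝 (P (S k))) := by
    intro k
    have h := (ENNReal.continuous_ofReal.tendsto _).comp (key k)
    rw [ENNReal.ofReal_toReal (hqtop k)] at h
    exact h.congr' (hof k)
  have hFt : ∀ k l, Tendsto (fun n => F (aa k n) (bb l)) atTop (𝓝 (F (bb k) (bb l))) := by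
    intro k l
    have h1 : Tendsto (fun n => ‖aa k n - bb l‖) atTop (𝓝 ‖bb k - bb l‖) :=
      ((haK k).sub tendsto_const_nhds).norm
    have h2 := h1.rpow_const (Or.inr hp0.le)
    exact (ENNReal.continuous_ofReal.tendsto _).comp h2
  have hFbb : ∀ k, F (bb k) (bb k) = 0 := by
    intro k
    simp only [hF, sub_self, norm_zero, Real.zero_rpow hp0.ne', ofReal_zero]
  have hCtop : (∑ k, ∑ l, F (bb k) (bb l)) ≠ ⊤ :=
    (ENNReal.sum_lt_top.2 fun k _ =>
      ENNReal.sum_lt_top.2 fun l _ => ENNReal.ofReal_lt_top).ne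
  have hC : Tendsto (fun n => ∑ k, ∑ l, F (aa k n) (bb l)) atTop
      (𝓝 (∑ k, ∑ l, F (bb k) (bb l))) :=
    tendsto_finset_sum _ fun k _ => tendsto_finset_sum _ fun l _ => hFt k l
  have h1t : Tendsto (fun n => ∑ k, θ k n * F (aa k n) (bb k)) atTop (𝓝 0) := by
    have h := tendsto_finset_sum Finset.univ (fun k (_ : k ∈ Finset.univ) =>
      ENNReal.Tendsto.mul (hθt k) (Or.inl (hpos k).ne') (hFt k k) (Or.inr (hqtop k)))
    simpa only [hFbb, mul_zero, Finset.sum_const_zero] using h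
  have h2t : Tendsto (fun n => (∑ k, (P (S k) - θ k n))) atTop (𝓝 0) := by
    have hterm : ∀ k, Tendsto (fun n => P (S k) - θ k n) atTop (𝓝 0) := by
      intro k
      have hr : Tendsto (fun n : ℕ => (P (S k)).toReal -
          ((((Finset.range n).filter (fun i => u i ω ∈ S k)).card : ℝ) / n)) atTop
          (𝓝 0) := by
        have := (key k).const_sub ((P (S k)).toReal)
        simpa using this
      have h := (ENNReal.continuous_ofReal.tendsto _).comp hr
      rw [ofReal_zero] at h
      refine h.congr' ?_
      filter_upwards [hof k] with n hn
      simp only [Function.comp_apply]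
      rw [ENNReal.ofReal_sub _ (by positivity), ENNReal.ofReal_toReal (hqtop k), hn]
    have h := tendsto_finset_sum Finset.univ (fun k (_ : k ∈ Finset.univ) => hterm k)
    simpa using h
  have hBt : Tendsto Bnd atTop (𝓝 0) := by
    have h := h1t.add (ENNReal.Tendsto.mul h2t (Or.inr hCtop) hC (Or.inr zero_ne_top))
    simpa using h
  have hgt : Tendsto (fun n => ((Bnd n) ^ (1 / p)).toReal) atTop (𝓝 0) := by
    have h1 : Tendsto (fun n => (Bnd n) ^ (1 / p)) atTop (𝓝 0) := by
      have h := ((ENNReal.continuous_rpow_const (y := 1/p)).tendsto 0).comp hBt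
      rwa [ENNReal.zero_rpow_of_pos (by positivity)] at h
    have h := (ENNReal.tendsto_toReal (by simp : (0:ℝ≥0∞) ≠ ⊤)).comp h1
    simpa [Function.comp_def] using h
  refine squeeze_zero' (Eventually.of_forall fun n => ENNReal.toReal_nonneg) ?_ hgt
  filter_upwards [eventually_ge_atTop 1] with n hn
  have hnn0 : (n : ℝ≥0∞) ≠ 0 := Nat.cast_ne_zero.2 (by omega)
  have hθ1 : ∑ k, θ k n = 1 := by
    have hcsum := sum_card_filter S hdisj hcover u ω n
    calc ∑ k, θ k n
        = (∑ k, ((((Finset.range n).filter (fun i => u i ω ∈ S k)).card : ℝ≥0∞))) / n := by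
          simp only [hθ, div_eq_mul_inv]
          rw [← Finset.sum_mul]
      _ = ((n : ℕ) : ℝ≥0∞) / n := by rw [← Nat.cast_sum, hcsum]
      _ = 1 := ENNReal.div_self hnn0 (natCast_ne_top n)
  obtain ⟨π, hπ, hcost⟩ := exists_coupling p (fun k => aa k n) bb (fun k => θ k n) (fun k => P (S k)) hθ1 hq1
  have hBndtop : Bnd n ≠ ⊤ := by
    rw [hBnd]
    refine ENNReal.add_ne_top.2 ⟨?_, ?_⟩
    · refine (ENNReal.sum_lt_top.2 fun k _ => ?_).ne
      exact ENNReal.mul_lt_top (lt_top_iff_ne_top.2 (hθtop k n hn)) ENNReal.ofReal_lt_top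
    · refine ENNReal.mul_ne_top ?_ ?_
      · refine ((Finset.sum_le_sum fun k (_ : k ∈ Finset.univ) => tsub_le_self).trans_lt ?_).ne
        rw [hq1]; exact one_lt_top
      · exact (ENNReal.sum_lt_top.2 fun k _ =>
          ENNReal.sum_lt_top.2 fun l _ => ENNReal.ofReal_lt_top).ne
  have e1 : clusteredEmp S u n ω = ∑ k, θ k n • Measure.dirac (aa k n) := rfl
  have e2 : limitClustered P S = ∑ k, P (S k) • Measure.dirac (bb k) := rfl
  rw [e1, e2]
  exact wassDist_le_of_coupling hp0 hBndtop hπ hcost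
end
end

section
/- Let p ∈ [1,∞), let P be a Borel probability measure on ℝ^d with finite p-th moment, let S¹,…,S^K be a Borel partition of ℝ^d with P(S^k) > 0 for every k, and let (uᵢ)_{i≥1} be i.i.d. with law P. Define the clustering value D_p(n) = ((1/n) Σ_{i≤n} Σ_k 1{uᵢ ∈ S^k} ‖uᵢ − ū^k(n)‖^p)^{1/p}, where ū^k(n) is the sample mean of those uᵢ with i ≤ n and uᵢ ∈ S^k. Then almost surely lim_{n→∞} D_p(n) = (∫ Σ_k 1{u ∈ S^k} ‖u − ū^k_⋆‖^p dP(u))^{1/p}, where ū^k_⋆ = (∫_{S^k} u dP)/P(S^k). -/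
set_option maxHeartbeats 1000000


open MeasureTheory ENNReal Filter

noncomputable section

attribute [local instance] Classical.propDecidable

section helpers

open ProbabilityTheory Topology


open ProbabilityTheory Topology

lemma rpow_sub_rpow_le_mvt {p a c : ℝ} (hp : 1 ≤ p) (hc : 0 ≤ c) (hca : c ≤ a) :
    a ^ p - c ^ p ≤ p * a ^ (p - 1) * (a - c) := by
  rcases eq_or_lt_of_le hca with rfl | h
  · simp
  · obtain ⟨ξ, hξ, hslope⟩ := exists_hasDerivAt_eq_slope (fun x : ℝ => x ^ p)
      (fun x : ℝ => p * x ^ (p - 1)) h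
      ((Real.continuous_rpow_const (by linarith)).continuousOn)
      (fun x _ => Real.hasDerivAt_rpow_const (Or.inr hp))
    have hac : 0 < a - c := sub_pos.2 h
    have h1 : a ^ p - c ^ p = p * ξ ^ (p - 1) * (a - c) := by
      rw [eq_div_iff hac.ne'] at hslope
      linarith
    rw [h1]
    have hξ0 : 0 ≤ ξ := hc.trans hξ.1.le
    have : ξ ^ (p - 1) ≤ a ^ (p - 1) :=
      Real.rpow_le_rpow hξ0 hξ.2.le (by linarith)
    exact mul_le_mul_of_nonneg_right
      (mul_le_mul_of_nonneg_left this (by linarith)) hac.le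

lemma abs_rpow_sub_rpow_le' {p a c : ℝ} (hp : 1 ≤ p) (ha : 0 ≤ a) (hc : 0 ≤ c) :
    |a ^ p - c ^ p| ≤ p * (max a c) ^ (p - 1) * |a - c| := by
  rcases le_total c a with h | h
  · rw [abs_of_nonneg (sub_nonneg.2 (Real.rpow_le_rpow hc h (by linarith))),
      abs_of_nonneg (sub_nonneg.2 h), max_eq_left h]
    exact rpow_sub_rpow_le_mvt hp hc h
  · rw [abs_sub_comm, abs_sub_comm a c,
      abs_of_nonneg (sub_nonneg.2 (Real.rpow_le_rpow ha h (by linarith))),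
      abs_of_nonneg (sub_nonneg.2 h), max_eq_right h]
    exact rpow_sub_rpow_le_mvt hp ha h

lemma center_diff {d : ℕ} {p : ℝ} (hp : 1 ≤ p) (x b b' : Euc d) :
    |‖x - b‖ ^ p - ‖x - b'‖ ^ p| ≤
      p * (‖x‖ + (‖b‖ + ‖b'‖)) ^ (p - 1) * ‖b - b'‖ := by
  refine (abs_rpow_sub_rpow_le' hp (norm_nonneg _) (norm_nonneg _)).trans ?_
  have h1 : max ‖x - b‖ ‖x - b'‖ ≤ ‖x‖ + (‖b‖ + ‖b'‖) := by
    refine max_le ((norm_sub_le _ _).trans ?_) ((norm_sub_le _ _).trans ?_) <;>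
      [linarith [norm_nonneg b']; linarith [norm_nonneg b]]
  have h2 : |‖x - b‖ - ‖x - b'‖| ≤ ‖b - b'‖ := by
    have := abs_norm_sub_norm_le (x - b) (x - b')
    simpa [norm_sub_rev b b'] using this.trans_eq (by rw [show x - b - (x - b') = b' - b by abel])
  have hp0 : (0:ℝ) ≤ p := by linarith
  have hmax : (max ‖x - b‖ ‖x - b'‖) ^ (p-1) ≤ (‖x‖ + (‖b‖ + ‖b'‖)) ^ (p-1) :=
    Real.rpow_le_rpow (le_max_of_le_left (norm_nonneg _)) h1 (by linarith)
  calc p * (max ‖x - b‖ ‖x - b'‖) ^ (p-1) * |‖x - b‖ - ‖x - b'‖|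
      ≤ p * (‖x‖ + (‖b‖ + ‖b'‖)) ^ (p-1) * |‖x - b‖ - ‖x - b'‖| := by
        apply mul_le_mul_of_nonneg_right (mul_le_mul_of_nonneg_left hmax hp0) (abs_nonneg _)
    _ ≤ p * (‖x‖ + (‖b‖ + ‖b'‖)) ^ (p-1) * ‖b - b'‖ := by
        apply mul_le_mul_of_nonneg_left h2
        positivity

lemma add_rpow_le2 {q x y : ℝ} (hq : 0 ≤ q) (hx : 0 ≤ x) (hy : 0 ≤ y) :
    (x + y) ^ q ≤ 2 ^ q * (x ^ q + y ^ q) := by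
  have h1 : x + y ≤ 2 * max x y := by
    rcases le_total x y with h | h
    · rw [max_eq_right h]; linarith
    · rw [max_eq_left h]; linarith
  calc (x + y) ^ q ≤ (2 * max x y) ^ q :=
        Real.rpow_le_rpow (by positivity) h1 hq
    _ = 2 ^ q * (max x y) ^ q := Real.mul_rpow (by norm_num) (le_max_of_le_left hx)
    _ ≤ 2 ^ q * (x ^ q + y ^ q) := by
        gcongr
        rcases max_cases x y with ⟨h, _⟩ | ⟨h, _⟩ <;> rw [h]
        · exact le_add_of_nonneg_right (Real.rpow_nonneg hy q)
        · exact le_add_of_nonneg_left (Real.rpow_nonneg hx q)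

lemma slln_transfer {d : ℕ} {Ω : Type*} [MeasurableSpace Ω] (Pr : Measure Ω)
    [IsProbabilityMeasure Pr]
    (P : Measure (Euc d)) (u : ℕ → Ω → Euc d) (hmeas : ∀ i, Measurable (u i))
    (hindep : ProbabilityTheory.iIndepFun u Pr)
    (hlaw : ∀ i, Measure.map (u i) Pr = P)
    {E : Type*} [NormedAddCommGroup E] [NormedSpace ℝ E] [CompleteSpace E]
    [MeasurableSpace E] [BorelSpace E] [SecondCountableTopology E]
    (g : Euc d → E) (hg : Measurable g) (hgint : Integrable g P) :
    ∀ᵐ ω ∂Pr, Tendsto (fun n : ℕ => (n : ℝ)⁻¹ • ∑ i ∈ Finset.range n, g (u i ω)) atTop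
      (𝓝 (∫ x, g x ∂P)) := by
  have hint : Integrable (fun ω => g (u 0 ω)) Pr := by
    have : Integrable g (Measure.map (u 0) Pr) := by rw [hlaw 0]; exact hgint
    exact this.comp_measurable (hmeas 0)
  have hident : ∀ i, IdentDistrib (fun ω => g (u i ω)) (fun ω => g (u 0 ω)) Pr Pr := by
    intro i
    have hid : IdentDistrib (u i) (u 0) Pr Pr :=
      ⟨(hmeas i).aemeasurable, (hmeas 0).aemeasurable, (hlaw i).trans (hlaw 0).symm⟩
    exact hid.comp hg
  have hpind : Pairwise (Function.onFun (IndepFun · · Pr) (fun i ω => g (u i ω))) := by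
    intro i j hij
    exact (hindep.indepFun hij).comp hg hg
  have hexp : (∫ ω, g (u 0 ω) ∂Pr) = ∫ x, g x ∂P := by
    rw [← hlaw 0, integral_map (hmeas 0).aemeasurable hg.aestronglyMeasurable]
  have := strong_law_ae (μ := Pr) (fun i ω => g (u i ω)) hint hpind hident
  simpa [hexp] using this

end helpers

open Topology

/-- almost surely the clustering value
`D_p(n) = ((1/n) Σ_{i≤n} Σ_k 1{uᵢ ∈ S^k} ‖uᵢ − ū^k(n)‖^p)^{1/p}` converges to
`(∫ Σ_k 1{u ∈ S^k} ‖u − ū^k_⋆‖^p dP)^{1/p}`. -/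
theorem stmt5 {d K : ℕ} {Ω : Type*} [MeasurableSpace Ω] (Pr : Measure Ω) [IsProbabilityMeasure Pr]
    (p : ℝ) (hp : 1 ≤ p) (P : Measure (Euc d)) [IsProbabilityMeasure P]
    (hmom : HasFiniteMoment p P)
    (S : Fin K → Set (Euc d)) (hSmeas : ∀ k, MeasurableSet (S k))
    (hdisj : ∀ k l : Fin K, k ≠ l → Disjoint (S k) (S l))
    (hcover : (⋃ k, S k) = Set.univ)
    (hpos : ∀ k, 0 < P (S k))
    (u : ℕ → Ω → Euc d) (hmeas : ∀ i, Measurable (u i))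
    (hindep : ProbabilityTheory.iIndepFun u Pr)
    (hlaw : ∀ i, Measure.map (u i) Pr = P) :
    ∀ᵐ ω ∂Pr,
      Tendsto (fun n : ℕ =>
          ((n : ℝ)⁻¹ * ∑ i ∈ Finset.range n, ∑ k,
            (if u i ω ∈ S k then ‖u i ω - clusterSampleMean u (S k) n ω‖ ^ p else 0)) ^ (1 / p))
        atTop
        (nhds ((∫ x, ∑ k, (if x ∈ S k then ‖x - condMean P (S k)‖ ^ p else 0) ∂P) ^ (1 / p))) := by
  have hp0 : (0:ℝ) < p := lt_of_lt_of_le one_pos hp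
  have hq0 : (0:ℝ) ≤ p - 1 := by linarith
  -- basic integrability
  have hcont_p : Continuous (fun x : Euc d => ‖x‖ ^ p) :=
    (Real.continuous_rpow_const hp0.le).comp continuous_norm
  have hnormp_int : Integrable (fun x : Euc d => ‖x‖ ^ p) P :=
    ⟨hcont_p.aestronglyMeasurable,
      (hasFiniteIntegral_iff_ofReal
        (ae_of_all _ fun x => Real.rpow_nonneg (norm_nonneg x) p)).2 hmom⟩
  have int_rpow : ∀ r : ℝ, 0 ≤ r → r ≤ p → Integrable (fun x : Euc d => ‖x‖ ^ r) P := by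
    intro r hr hrp
    refine Integrable.mono' ((integrable_const (1:ℝ)).add hnormp_int)
      (((Real.continuous_rpow_const hr).comp continuous_norm).aestronglyMeasurable)
      (ae_of_all _ fun x => ?_)
    rw [Real.norm_of_nonneg (Real.rpow_nonneg (norm_nonneg x) r)]
    rcases le_total ‖x‖ 1 with h | h
    · have h1 := Real.rpow_le_one (norm_nonneg x) h hr
      have h2 := Real.rpow_nonneg (norm_nonneg x) p
      simp only [Pi.add_apply]; linarith
    · have h1 := Real.rpow_le_rpow_of_exponent_le h hrp
      have h2 : (0:ℝ) ≤ 1 := zero_le_one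
      simp only [Pi.add_apply]; linarith
  have hid_int : Integrable (fun x : Euc d => x) P := by
    refine Integrable.mono' (by simpa using int_rpow 1 zero_le_one hp)
      aestronglyMeasurable_id (ae_of_all _ fun x => ?_)
    simp [Real.rpow_one]
  -- integrability of the centered p-th power, for any center
  have hgp_int : ∀ b : Euc d, Integrable (fun x : Euc d => ‖x - b‖ ^ p) P := by
    intro b
    refine Integrable.mono' ((hnormp_int.add (integrable_const (‖b‖ ^ p))).const_mul (2 ^ p))
      (((Real.continuous_rpow_const hp0.le).comp
        ((continuous_id.sub continuous_const).norm)).aestronglyMeasurable)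
      (ae_of_all _ fun x => ?_)
    rw [Real.norm_of_nonneg (Real.rpow_nonneg (norm_nonneg _) p)]
    calc ‖x - b‖ ^ p ≤ (‖x‖ + ‖b‖) ^ p :=
          Real.rpow_le_rpow (norm_nonneg _) (norm_sub_le x b) hp0.le
      _ ≤ 2 ^ p * (‖x‖ ^ p + ‖b‖ ^ p) := add_rpow_le2 hp0.le (norm_nonneg _) (norm_nonneg _)
  have hite_ind : ∀ (k : Fin K) (f : Euc d → ℝ),
      (fun x => if x ∈ S k then f x else 0) = Set.indicator (S k) f := by
    intro k f; funext x; simp [Set.indicator_apply]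
  have hg3_int : ∀ k : Fin K,
      Integrable (fun x : Euc d => if x ∈ S k then ‖x - condMean P (S k)‖ ^ p else 0) P := by
    intro k
    rw [hite_ind k]
    exact (hgp_int (condMean P (S k))).indicator (hSmeas k)
  -- the four strong laws
  have H1 := ae_all_iff.2 fun k : Fin K => slln_transfer Pr P u hmeas hindep hlaw
    (fun x => if x ∈ S k then (1:ℝ) else 0)
    (Measurable.ite (hSmeas k) measurable_const measurable_const)
    (by rw [hite_ind k]; exact (integrable_const (1:ℝ)).indicator (hSmeas k))
  have H2 := ae_all_iff.2 fun k : Fin K => slln_transfer Pr P u hmeas hindep hlaw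
    (fun x => if x ∈ S k then x else 0)
    (Measurable.ite (hSmeas k) measurable_id measurable_const)
    (by
      have : (fun x : Euc d => if x ∈ S k then x else 0) = Set.indicator (S k) id := by
        funext x; simp [Set.indicator_apply]
      rw [this]; exact hid_int.indicator (hSmeas k))
  have H3 := ae_all_iff.2 fun k : Fin K => slln_transfer Pr P u hmeas hindep hlaw
    (fun x => if x ∈ S k then ‖x - condMean P (S k)‖ ^ p else 0)
    (Measurable.ite (hSmeas k)
      (((Real.continuous_rpow_const hp0.le).comp
        ((continuous_id.sub continuous_const).norm)).measurable) measurable_const)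
    (hg3_int k)
  have H4 := slln_transfer Pr P u hmeas hindep hlaw (fun x => ‖x‖ ^ (p - 1))
    (((Real.continuous_rpow_const hq0).comp continuous_norm).measurable)
    (int_rpow (p - 1) hq0 (by linarith))
  filter_upwards [H1, H2, H3, H4] with ω hω1 hω2 hω3 hω4
  -- deterministic part
  have hπpos : ∀ k : Fin K, 0 < (P (S k)).toReal :=
    fun k => ENNReal.toReal_pos (hpos k).ne' (measure_ne_top P _)
  -- empirical frequencies
  have hN : ∀ k : Fin K, Tendsto
      (fun n : ℕ => (n : ℝ)⁻¹ * (((Finset.range n).filter (fun i => u i ω ∈ S k)).card : ℝ))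
      atTop (𝓝 ((P (S k)).toReal)) := by
    intro k
    have hval : (∫ x, (if x ∈ S k then (1:ℝ) else 0) ∂P) = (P (S k)).toReal := by
      rw [hite_ind k, integral_indicator (hSmeas k)]
      simp
      rfl
    have := hω1 k
    rw [hval] at this
    refine this.congr fun n => ?_
    rw [smul_eq_mul, Finset.sum_boole]
  -- empirical in-cluster sums
  have hW : ∀ k : Fin K, Tendsto
      (fun n : ℕ => (n : ℝ)⁻¹ •
        ∑ i ∈ (Finset.range n).filter (fun i => u i ω ∈ S k), u i ω)
      atTop (𝓝 (∫ x in S k, x ∂P)) := by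
    intro k
    have hval : (∫ x, (if x ∈ S k then x else 0) ∂P) = ∫ x in S k, x ∂P := by
      have : (fun x : Euc d => if x ∈ S k then x else 0) = Set.indicator (S k) id := by
        funext x; simp [Set.indicator_apply]
      rw [this, integral_indicator (hSmeas k)]
      rfl
    have := hω2 k
    rw [hval] at this
    refine this.congr fun n => ?_
    congr 1
    rw [Finset.sum_filter]
  -- cluster sample means converge
  have hb : ∀ k : Fin K, Tendsto (fun n : ℕ => clusterSampleMean u (S k) n ω) atTop
      (𝓝 (condMean P (S k))) := by
    intro k
    have hev : ∀ᶠ n : ℕ in atTop,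
        0 < (n : ℝ)⁻¹ * (((Finset.range n).filter (fun i => u i ω ∈ S k)).card : ℝ) :=
      (hN k).eventually (eventually_gt_nhds (hπpos k))
    have hlim : Tendsto
        (fun n : ℕ => ((n : ℝ)⁻¹ *
            (((Finset.range n).filter (fun i => u i ω ∈ S k)).card : ℝ))⁻¹ •
          ((n : ℝ)⁻¹ • ∑ i ∈ (Finset.range n).filter (fun i => u i ω ∈ S k), u i ω))
        atTop (𝓝 (((P (S k)).toReal)⁻¹ • ∫ x in S k, x ∂P)) :=
      ((hN k).inv₀ (hπpos k).ne').smul (hW k)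
    refine Tendsto.congr' ?_ hlim
    filter_upwards [hev] with n hn
    set c : ℝ := (((Finset.range n).filter (fun i => u i ω ∈ S k)).card : ℝ) with hc
    have hn0 : (n : ℝ) ≠ 0 := by
      intro h; rw [h] at hn; simpa using hn
    have hc0 : c ≠ 0 := by
      intro h; rw [h] at hn; simpa using hn
    show ((n : ℝ)⁻¹ * c)⁻¹ • ((n : ℝ)⁻¹ •
        ∑ i ∈ (Finset.range n).filter (fun i => u i ω ∈ S k), u i ω) =
      clusterSampleMean u (S k) n ω
    rw [clusterSampleMean, smul_smul]
    congr 1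
    rw [mul_inv, inv_inv, ← hc]
    field_simp
  -- main convergence (before taking the 1/p power)
  have main : Tendsto (fun n : ℕ =>
      (n : ℝ)⁻¹ * ∑ i ∈ Finset.range n, ∑ k,
        (if u i ω ∈ S k then ‖u i ω - clusterSampleMean u (S k) n ω‖ ^ p else 0))
      atTop (𝓝 (∫ x, ∑ k, (if x ∈ S k then ‖x - condMean P (S k)‖ ^ p else 0) ∂P)) := by
    rw [integral_finset_sum Finset.univ (fun k _ => hg3_int k)]
    have hswap : ∀ n : ℕ,
        (n : ℝ)⁻¹ * ∑ i ∈ Finset.range n, ∑ k,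
          (if u i ω ∈ S k then ‖u i ω - clusterSampleMean u (S k) n ω‖ ^ p else 0)
        = ∑ k, ((n : ℝ)⁻¹ * ∑ i ∈ Finset.range n,
          (if u i ω ∈ S k then ‖u i ω - clusterSampleMean u (S k) n ω‖ ^ p else 0)) := by
      intro n
      rw [Finset.sum_comm, Finset.mul_sum]
    refine Tendsto.congr (fun n => (hswap n).symm) (tendsto_finset_sum _ fun k _ => ?_)
    -- single cluster
    set bs : Euc d := condMean P (S k) with hbs
    set b : ℕ → Euc d := fun n => clusterSampleMean u (S k) n ω with hbdef
    set Z : ℕ → ℝ := fun n => (n : ℝ)⁻¹ * ∑ i ∈ Finset.range n,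
      (if u i ω ∈ S k then ‖u i ω - bs‖ ^ p else 0) with hZdef
    set T : ℕ → ℝ := fun n => (n : ℝ)⁻¹ * ∑ i ∈ Finset.range n,
      (if u i ω ∈ S k then ‖u i ω - b n‖ ^ p else 0) with hTdef
    have hZ : Tendsto Z atTop (𝓝 (∫ x, (if x ∈ S k then ‖x - bs‖ ^ p else 0) ∂P)) := by
      refine (hω3 k).congr fun n => ?_
      rw [smul_eq_mul]
    set ε : ℕ → ℝ := fun n => ‖b n - bs‖ with hεdef
    set M : ℕ → ℝ := fun n => ‖b n‖ + ‖bs‖ with hMdef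
    set A : ℕ → ℝ := fun n => (n : ℝ)⁻¹ * ∑ i ∈ Finset.range n, ‖u i ω‖ ^ (p - 1) with hAdef
    set D : ℕ → ℝ := fun n => p * 2 ^ (p - 1) * ((A n + M n ^ (p - 1)) * ε n) with hDdef
    have hε : Tendsto ε atTop (𝓝 0) := by
      have := (hb k)
      rw [tendsto_iff_norm_sub_tendsto_zero] at this
      exact this
    have hA : Tendsto A atTop (𝓝 (∫ x, ‖x‖ ^ (p - 1) ∂P)) := by
      refine hω4.congr fun n => ?_
      rw [smul_eq_mul]
    have hM : Tendsto (fun n => M n ^ (p - 1)) atTop (𝓝 ((‖bs‖ + ‖bs‖) ^ (p - 1))) :=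
      (((hb k).norm.add tendsto_const_nhds).rpow_const (Or.inr hq0))
    have hD : Tendsto D atTop (𝓝 0) := by
      have := tendsto_const_nhds (x := p * 2 ^ (p - 1)) (f := atTop (α := ℕ)) |>.mul
        ((hA.add hM).mul hε)
      simpa using this
    have hbound : ∀ n : ℕ, |T n - Z n| ≤ D n := by
      intro n
      rcases Nat.eq_zero_or_pos n with rfl | hn
      · have hT0 : T 0 - Z 0 = 0 := by simp [hTdef, hZdef]
        rw [hT0, abs_zero, hDdef]
        have h1 : (0:ℝ) ≤ ε 0 := by simp only [hεdef]; exact norm_nonneg _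
        have h2 : (0:ℝ) ≤ A 0 := by simp [hAdef]
        have h3 : (0:ℝ) ≤ M 0 := by
          simp only [hMdef]; exact add_nonneg (norm_nonneg _) (norm_nonneg _)
        have h4 : (0:ℝ) ≤ M 0 ^ (p - 1) := Real.rpow_nonneg h3 _
        exact mul_nonneg (mul_nonneg hp0.le (Real.rpow_nonneg (by norm_num) _))
          (mul_nonneg (add_nonneg h2 h4) h1)
      · have hn0 : (n : ℝ) ≠ 0 := Nat.cast_ne_zero.2 hn.ne'
        have hTZ : T n - Z n = (n : ℝ)⁻¹ * ∑ i ∈ Finset.range n,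
            ((if u i ω ∈ S k then ‖u i ω - b n‖ ^ p else 0) -
             (if u i ω ∈ S k then ‖u i ω - bs‖ ^ p else 0)) := by
          rw [hTdef, hZdef, Finset.sum_sub_distrib, mul_sub]
        have hterm : ∀ i ∈ Finset.range n,
            |(if u i ω ∈ S k then ‖u i ω - b n‖ ^ p else 0) -
             (if u i ω ∈ S k then ‖u i ω - bs‖ ^ p else 0)| ≤
              p * 2 ^ (p - 1) * (‖u i ω‖ ^ (p - 1) + M n ^ (p - 1)) * ε n := by
          intro i _
          by_cases hmem : u i ω ∈ S k
          · simp only [hmem, if_true]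
            refine (center_diff hp (u i ω) (b n) bs).trans ?_
            have h1 : (‖u i ω‖ + (‖b n‖ + ‖bs‖)) ^ (p - 1) ≤
                2 ^ (p - 1) * (‖u i ω‖ ^ (p - 1) + M n ^ (p - 1)) :=
              add_rpow_le2 hq0 (norm_nonneg _) (by positivity)
            calc p * (‖u i ω‖ + (‖b n‖ + ‖bs‖)) ^ (p - 1) * ‖b n - bs‖
                ≤ p * (2 ^ (p - 1) * (‖u i ω‖ ^ (p - 1) + M n ^ (p - 1))) * ‖b n - bs‖ := by
                  apply mul_le_mul_of_nonneg_right
                    (mul_le_mul_of_nonneg_left h1 hp0.le) (norm_nonneg _)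
              _ = p * 2 ^ (p - 1) * (‖u i ω‖ ^ (p - 1) + M n ^ (p - 1)) * ε n := by
                  simp only [hεdef]; ring
          · simp only [hmem, if_false, sub_zero, abs_zero]
            have h1 : (0:ℝ) ≤ ‖u i ω‖ ^ (p - 1) := Real.rpow_nonneg (norm_nonneg _) _
            have h2 : (0:ℝ) ≤ M n ^ (p - 1) := Real.rpow_nonneg
              (by simp only [hMdef]; exact add_nonneg (norm_nonneg _) (norm_nonneg _)) _
            have h3 : (0:ℝ) ≤ ε n := by simp only [hεdef]; exact norm_nonneg _
            exact mul_nonneg (mul_nonneg (mul_nonneg hp0.le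
              (Real.rpow_nonneg (by norm_num) _)) (add_nonneg h1 h2)) h3
        calc |T n - Z n| ≤ (n : ℝ)⁻¹ * ∑ i ∈ Finset.range n,
              (p * 2 ^ (p - 1) * (‖u i ω‖ ^ (p - 1) + M n ^ (p - 1)) * ε n) := by
              rw [hTZ, abs_mul, abs_of_nonneg (by positivity : (0:ℝ) ≤ (n:ℝ)⁻¹)]
              exact mul_le_mul_of_nonneg_left
                ((Finset.abs_sum_le_sum_abs _ _).trans (Finset.sum_le_sum hterm))
                (by positivity)
          _ = D n := by
              rw [hDdef, hAdef]
              simp only [Finset.sum_add_distrib, Finset.sum_const, Finset.card_range,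
                nsmul_eq_mul, ← Finset.sum_mul, ← Finset.mul_sum]
              field_simp
    have hdiff : Tendsto (fun n => T n - Z n) atTop (𝓝 0) := by
      refine tendsto_of_tendsto_of_tendsto_of_le_of_le (g := fun n => -(D n)) (h := D)
        (by simpa using hD.neg) hD (fun n => (abs_le.1 (hbound n)).1)
        (fun n => (abs_le.1 (hbound n)).2)
    have := hdiff.add hZ
    simpa using this
  exact main.rpow_const (Or.inr (by positivity))
end
end

section
/- Let f: ℝ^d → ℝ be differentiable with L-Lipschitz gradient (i.e., ‖∇f(u) − ∇f(v)‖ ≤ L‖u − v‖ for all u, v, Euclidean norm), and let μ, ν be Borel probability measures on ℝ^d with finite second moments. Then ∫ f dμ − ∫ f dν ≤ (∫ ‖∇f(v)‖² dν(v))^{1/2} · W_2(μ, ν) + (L/2) · W_2(μ, ν)². -/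
open MeasureTheory ENNReal Filter
open Topology

noncomputable section

lemma rpow_two_eq (x : ℝ) : x ^ (2:ℝ) = x ^ 2 := by
  rw [show (2:ℝ) = ((2:ℕ):ℝ) by norm_num, Real.rpow_natCast]

lemma descent {d : ℕ} {f : Euc d → ℝ} {f' : Euc d → Euc d} {L : ℝ}
    (hdiff : ∀ u : Euc d, HasGradientAt f (f' u) u)
    (hL : ∀ u v : Euc d, ‖f' u - f' v‖ ≤ L * ‖u - v‖) (u v : Euc d) :
    f u - f v ≤ inner ℝ (f' v) (u - v) + L / 2 * ‖u - v‖ ^ 2 := by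
  set N : ℝ := ‖u - v‖ ^ 2 with hN
  set γ : ℝ → Euc d := fun t => v + t • (u - v) with hγdef
  have hγ : ∀ t : ℝ, HasDerivAt γ (u - v) t := fun t => by
    simpa [hγdef] using ((hasDerivAt_id t).smul_const (u - v)).const_add v
  have hg : ∀ t : ℝ, HasDerivAt (fun s => f (γ s)) ((inner ℝ (f' (γ t)) (u - v) : ℝ)) t := by
    intro t
    have h1 := ((hdiff (γ t)).hasFDerivAt).comp_hasDerivAt t (hγ t)
    exact h1
  set φ : ℝ → ℝ := fun t => f (γ t) - t * (inner ℝ (f' v) (u - v) : ℝ) - L / 2 * (t ^ 2 * N)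
    with hφdef
  have hφ : ∀ t : ℝ, HasDerivAt φ
      ((inner ℝ (f' (γ t)) (u - v) : ℝ) - (inner ℝ (f' v) (u - v) : ℝ) - L / 2 * (2 * t * N)) t := by
    intro t
    have h2 : HasDerivAt (fun s : ℝ => s * (inner ℝ (f' v) (u - v) : ℝ))
        ((inner ℝ (f' v) (u - v) : ℝ)) t := by
      simpa using (hasDerivAt_id t).mul_const (inner ℝ (f' v) (u - v) : ℝ)
    have h3 : HasDerivAt (fun s : ℝ => L / 2 * (s ^ 2 * N)) (L / 2 * (2 * t * N)) t := by
      have := ((hasDerivAt_pow 2 t).mul_const N).const_mul (L / 2)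
      refine this.congr_deriv ?_
      norm_num
    exact ((hg t).sub h2).sub h3
  have hcont : Continuous φ := by
    have : Differentiable ℝ φ := fun t => (hφ t).differentiableAt
    exact this.continuous
  have hanti : AntitoneOn φ (Set.Icc (0:ℝ) 1) := by
    apply antitoneOn_of_deriv_nonpos (convex_Icc 0 1) hcont.continuousOn
    · intro x _
      exact (hφ x).differentiableAt.differentiableWithinAt
    · intro x hx
      rw [interior_Icc] at hx
      rw [(hφ x).deriv]
      have h4 : (inner ℝ (f' (γ x)) (u - v) : ℝ) - (inner ℝ (f' v) (u - v) : ℝ)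
          = inner ℝ (f' (γ x) - f' v) (u - v) := (inner_sub_left _ _ _).symm
      have h5 : (inner ℝ (f' (γ x) - f' v) (u - v) : ℝ) ≤ ‖f' (γ x) - f' v‖ * ‖u - v‖ :=
        real_inner_le_norm _ _
      have h6 : ‖f' (γ x) - f' v‖ ≤ L * (x * ‖u - v‖) := by
        have := hL (γ x) v
        have h7 : γ x - v = x • (u - v) := by simp [hγdef]
        rw [h7, norm_smul, Real.norm_eq_abs, abs_of_pos hx.1] at this
        linarith [this]
      have h8 : (0:ℝ) ≤ ‖u - v‖ := norm_nonneg _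
      have h7 := h5.trans (mul_le_mul_of_nonneg_right h6 h8)
      have h9 : L / 2 * (2 * x * N) = L * (x * ‖u - v‖) * ‖u - v‖ := by rw [hN]; ring
      rw [sub_le_iff_le_add, ← sub_le_iff_le_add']
      rw [h4]
      linarith [h7, h9]
  have h9 : φ 1 ≤ φ 0 := hanti (Set.left_mem_Icc.2 zero_le_one)
    (Set.right_mem_Icc.2 zero_le_one) zero_le_one
  have h10 : γ 0 = v := by simp [hγdef]
  have h11 : γ 1 = u := by simp [hγdef]
  simp only [hφdef, h10, h11] at h9
  nlinarith [h9]


lemma integrable_sq_norm {d : ℕ} (ρ : Measure (Euc d)) (hρ : HasFiniteMoment 2 ρ) :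
    Integrable (fun u : Euc d => ‖u‖ ^ 2) ρ := by
  constructor
  · exact (continuous_norm.pow 2).aestronglyMeasurable
  · rw [hasFiniteIntegral_iff_ofReal (Eventually.of_forall fun u => by positivity)]
    have h := hρ
    unfold HasFiniteMoment at h
    simpa [rpow_two_eq] using h

lemma integrable_norm' {d : ℕ} (ρ : Measure (Euc d)) [IsProbabilityMeasure ρ]
    (hρ : HasFiniteMoment 2 ρ) : Integrable (fun u : Euc d => ‖u‖) ρ := by
  have h2 : MemLp (fun u : Euc d => ‖u‖) 2 ρ :=
    (memLp_two_iff_integrable_sq continuous_norm.aestronglyMeasurable).2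
      (integrable_sq_norm ρ hρ)
  exact memLp_one_iff_integrable.1 (h2.mono_exponent (by norm_num))

lemma f'_growth {d : ℕ} {f' : Euc d → Euc d} {L : ℝ}
    (hL : ∀ u v : Euc d, ‖f' u - f' v‖ ≤ L * ‖u - v‖) (v : Euc d) :
    ‖f' v‖ ≤ ‖f' 0‖ + L * ‖v‖ := by
  have h1 := hL v 0
  simp only [sub_zero] at h1
  have h2 := norm_sub_norm_le (f' v) (f' 0)
  linarith

lemma integrable_f {d : ℕ} {f : Euc d → ℝ} {f' : Euc d → Euc d} {L : ℝ}
    (hdiff : ∀ u : Euc d, HasGradientAt f (f' u) u)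
    (hL : ∀ u v : Euc d, ‖f' u - f' v‖ ≤ L * ‖u - v‖) (hL0 : 0 ≤ L)
    (ρ : Measure (Euc d)) [IsProbabilityMeasure ρ] (hρ : HasFiniteMoment 2 ρ) :
    Integrable f ρ := by
  have hfd : Differentiable ℝ f := fun u => (hdiff u).differentiableAt
  have hfc : Continuous f := hfd.continuous
  have hbnd : ∀ u : Euc d, ‖f u‖ ≤ |f 0| + ‖f' 0‖ * ‖u‖ + (3 * L / 2) * ‖u‖ ^ 2 := by
    intro u
    have d1 := descent hdiff hL u 0
    have d2 := descent hdiff hL 0 u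
    simp only [sub_zero, zero_sub] at d1 d2
    have e1 : (inner ℝ (f' 0) u : ℝ) ≤ ‖f' 0‖ * ‖u‖ := real_inner_le_norm _ _
    have e2 : (inner ℝ (f' u) (-u) : ℝ) ≤ ‖f' u‖ * ‖u‖ := by
      have := real_inner_le_norm (f' u) (-u)
      simpa using this
    have e3 : ‖f' u‖ * ‖u‖ ≤ (‖f' 0‖ + L * ‖u‖) * ‖u‖ :=
      mul_le_mul_of_nonneg_right (f'_growth hL u) (norm_nonneg _)
    have e4 : ‖(-u : Euc d)‖ = ‖u‖ := norm_neg u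
    rw [e4] at d2
    rw [Real.norm_eq_abs, abs_le]
    constructor <;> nlinarith [abs_nonneg (f 0), le_abs_self (f 0), neg_abs_le (f 0),
      norm_nonneg u, sq_nonneg ‖u‖]
  refine (Integrable.add (Integrable.add (integrable_const (|f 0|))
    ((integrable_norm' ρ hρ).const_mul ‖f' 0‖))
    ((integrable_sq_norm ρ hρ).const_mul (3 * L / 2))).mono' hfc.aestronglyMeasurable ?_
  exact Eventually.of_forall fun u => by simpa [mul_comm] using hbnd u

lemma integrable_sq_f' {d : ℕ} {f' : Euc d → Euc d} {L : ℝ}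
    (hf'c : Continuous f')
    (hL : ∀ u v : Euc d, ‖f' u - f' v‖ ≤ L * ‖u - v‖)
    (ρ : Measure (Euc d)) [IsProbabilityMeasure ρ] (hρ : HasFiniteMoment 2 ρ) :
    Integrable (fun v : Euc d => ‖f' v‖ ^ 2) ρ := by
  refine (Integrable.add (integrable_const (2 * ‖f' 0‖ ^ 2))
    ((integrable_sq_norm ρ hρ).const_mul (2 * L ^ 2))).mono'
      ((hf'c.norm.pow 2).aestronglyMeasurable) ?_
  refine Eventually.of_forall fun v => ?_
  rw [Real.norm_eq_abs, abs_of_nonneg (by positivity)]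
  simp only [Pi.add_apply]
  have h1 := f'_growth hL v
  nlinarith [norm_nonneg (f' v), norm_nonneg v, sq_nonneg (‖f' 0‖ - L * ‖v‖)]

lemma key_coupling {d : ℕ} {f : Euc d → ℝ} {f' : Euc d → Euc d} {L : ℝ}
    (hdiff : ∀ u : Euc d, HasGradientAt f (f' u) u)
    (hL : ∀ u v : Euc d, ‖f' u - f' v‖ ≤ L * ‖u - v‖) (hL0 : 0 ≤ L)
    (μ ν : Measure (Euc d)) [IsProbabilityMeasure μ] [IsProbabilityMeasure ν]
    (hμ : HasFiniteMoment 2 μ) (hν : HasFiniteMoment 2 ν)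
    (π : Measure (Euc d × Euc d)) (hπ : IsCoupling π μ ν)
    (hH : Integrable (fun w : Euc d × Euc d => ‖w.1 - w.2‖ ^ 2) π) :
    (∫ u, f u ∂μ) - ∫ u, f u ∂ν ≤
      (∫ v, ‖f' v‖ ^ 2 ∂ν) ^ ((1 : ℝ) / 2) *
        (∫ w : Euc d × Euc d, ‖w.1 - w.2‖ ^ 2 ∂π) ^ ((1 : ℝ) / 2) +
      L / 2 * ∫ w : Euc d × Euc d, ‖w.1 - w.2‖ ^ 2 ∂π := by
  haveI : IsProbabilityMeasure π := hπ.1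
  have hfd : Differentiable ℝ f := fun u => (hdiff u).differentiableAt
  have hfc : Continuous f := hfd.continuous
  have hf'c : Continuous f' := by
    have : LipschitzWith (Real.toNNReal L) f' := by
      apply LipschitzWith.of_dist_le_mul
      intro x y
      rw [dist_eq_norm, dist_eq_norm]
      calc ‖f' x - f' y‖ ≤ L * ‖x - y‖ := hL x y
        _ ≤ Real.toNNReal L * ‖x - y‖ :=
          mul_le_mul_of_nonneg_right (Real.le_coe_toNNReal L) (norm_nonneg _)
    exact this.continuous
  have hmfst : AEMeasurable (Prod.fst : Euc d × Euc d → Euc d) π := measurable_fst.aemeasurable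
  have hmsnd : AEMeasurable (Prod.snd : Euc d × Euc d → Euc d) π := measurable_snd.aemeasurable
  -- transfer integrals of f
  have e1 : ∫ u, f u ∂μ = ∫ w : Euc d × Euc d, f w.1 ∂π := by
    rw [← hπ.2.1, integral_map hmfst hfc.aestronglyMeasurable]
  have e2 : ∫ u, f u ∂ν = ∫ w : Euc d × Euc d, f w.2 ∂π := by
    rw [← hπ.2.2, integral_map hmsnd hfc.aestronglyMeasurable]
  have iF1 : Integrable (fun w : Euc d × Euc d => f w.1) π := by
    have h := integrable_f hdiff hL hL0 μ hμ
    rw [← hπ.2.1] at h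
    exact (integrable_map_measure hfc.aestronglyMeasurable hmfst).1 h
  have iF2 : Integrable (fun w : Euc d × Euc d => f w.2) π := by
    have h := integrable_f hdiff hL hL0 ν hν
    rw [← hπ.2.2] at h
    exact (integrable_map_measure hfc.aestronglyMeasurable hmsnd).1 h
  have iS : Integrable (fun w : Euc d × Euc d => ‖f' w.2‖ ^ 2) π := by
    have h := integrable_sq_f' hf'c hL ν hν
    rw [← hπ.2.2] at h
    exact (integrable_map_measure ((hf'c.norm.pow 2).aestronglyMeasurable) hmsnd).1 h
  have hGc : Continuous (fun w : Euc d × Euc d => (inner ℝ (f' w.2) (w.1 - w.2) : ℝ)) :=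
    (hf'c.comp continuous_snd).inner (continuous_fst.sub continuous_snd)
  have hGbnd : ∀ w : Euc d × Euc d,
      ‖f' w.2‖ * ‖w.1 - w.2‖ ≤ (1/2) * (‖f' w.2‖ ^ 2 + ‖w.1 - w.2‖ ^ 2) := fun w => by
    nlinarith [sq_nonneg (‖f' w.2‖ - ‖w.1 - w.2‖)]
  have iBound : Integrable (fun w : Euc d × Euc d =>
      (1/2) * (‖f' w.2‖ ^ 2 + ‖w.1 - w.2‖ ^ 2)) π := ((iS.add hH).const_mul (1/2))
  have iG : Integrable (fun w : Euc d × Euc d => (inner ℝ (f' w.2) (w.1 - w.2) : ℝ)) π := by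
    refine iBound.mono' hGc.aestronglyMeasurable (Eventually.of_forall fun w => ?_)
    rw [Real.norm_eq_abs]
    refine le_trans (abs_real_inner_le_norm _ _) ?_
    simpa using hGbnd w
  have iP : Integrable (fun w : Euc d × Euc d => ‖f' w.2‖ * ‖w.1 - w.2‖) π := by
    refine iBound.mono' (((hf'c.comp continuous_snd).norm.mul
      ((continuous_fst.sub continuous_snd).norm)).aestronglyMeasurable)
      (Eventually.of_forall fun w => ?_)
    rw [Real.norm_eq_abs, abs_of_nonneg (by positivity)]
    simpa using hGbnd w
  -- step 1: reduce to the coupling integral and apply descent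
  have step1 : (∫ u, f u ∂μ) - ∫ u, f u ∂ν ≤
      (∫ w : Euc d × Euc d, (inner ℝ (f' w.2) (w.1 - w.2) : ℝ) ∂π) +
        L / 2 * ∫ w : Euc d × Euc d, ‖w.1 - w.2‖ ^ 2 ∂π := by
    rw [e1, e2, ← integral_sub iF1 iF2, ← integral_const_mul, ← integral_add iG (hH.const_mul _)]
    refine integral_mono (iF1.sub iF2) (iG.add (hH.const_mul _)) fun w => ?_
    exact descent hdiff hL w.1 w.2
  -- step 2: Cauchy-Schwarz
  have hconj : Real.HolderConjugate 2 2 := ⟨by norm_num, by norm_num, by norm_num⟩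
  have hm1 : MemLp (fun w : Euc d × Euc d => ‖f' w.2‖) (ENNReal.ofReal 2) π := by
    rw [show ENNReal.ofReal 2 = 2 by simp]
    exact (memLp_two_iff_integrable_sq
      ((hf'c.comp continuous_snd).norm.aestronglyMeasurable)).2 iS
  have hm2 : MemLp (fun w : Euc d × Euc d => ‖w.1 - w.2‖) (ENNReal.ofReal 2) π := by
    rw [show ENNReal.ofReal 2 = 2 by simp]
    exact (memLp_two_iff_integrable_sq
      ((continuous_fst.sub continuous_snd).norm.aestronglyMeasurable)).2 hH
  have cs := integral_mul_le_Lp_mul_Lq_of_nonneg hconj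
    (Eventually.of_forall fun w : Euc d × Euc d => norm_nonneg (f' w.2))
    (Eventually.of_forall fun w : Euc d × Euc d => norm_nonneg (w.1 - w.2)) hm1 hm2
  simp only [rpow_two_eq] at cs
  have step2 : (∫ w : Euc d × Euc d, (inner ℝ (f' w.2) (w.1 - w.2) : ℝ) ∂π) ≤
      (∫ w : Euc d × Euc d, ‖f' w.2‖ ^ 2 ∂π) ^ ((1:ℝ)/2) *
        (∫ w : Euc d × Euc d, ‖w.1 - w.2‖ ^ 2 ∂π) ^ ((1:ℝ)/2) := by
    refine le_trans (integral_mono iG iP fun w => real_inner_le_norm _ _) ?_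
    convert cs using 3 <;> norm_num
  have e3 : ∫ w : Euc d × Euc d, ‖f' w.2‖ ^ 2 ∂π = ∫ v, ‖f' v‖ ^ 2 ∂ν := by
    rw [← hπ.2.2, integral_map hmsnd (f := fun v => ‖f' v‖ ^ 2) ((hf'c.norm.pow 2).aestronglyMeasurable)]
  rw [e3] at step2
  linarith [step1, step2]

lemma cost_le {d : ℕ} (μ ν : Measure (Euc d)) [IsProbabilityMeasure μ] [IsProbabilityMeasure ν]
    (π : Measure (Euc d × Euc d)) (hπ : IsCoupling π μ ν) :
    ∫⁻ w : Euc d × Euc d, ENNReal.ofReal (‖w.1 - w.2‖ ^ (2:ℝ)) ∂π ≤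
      2 * (∫⁻ u, ENNReal.ofReal (‖u‖ ^ (2:ℝ)) ∂μ) +
      2 * (∫⁻ u, ENNReal.ofReal (‖u‖ ^ (2:ℝ)) ∂ν) := by
  have hmeas : Measurable (fun u : Euc d => ENNReal.ofReal (‖u‖ ^ (2:ℝ))) := by
    simp only [rpow_two_eq]
    exact (continuous_norm.pow 2).measurable.ennreal_ofReal
  have hpt : ∀ w : Euc d × Euc d, ENNReal.ofReal (‖w.1 - w.2‖ ^ (2:ℝ)) ≤
      2 * ENNReal.ofReal (‖w.1‖ ^ (2:ℝ)) + 2 * ENNReal.ofReal (‖w.2‖ ^ (2:ℝ)) := by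
    intro w
    simp only [rpow_two_eq]
    calc ENNReal.ofReal (‖w.1 - w.2‖ ^ 2) ≤ ENNReal.ofReal (2 * ‖w.1‖ ^ 2 + 2 * ‖w.2‖ ^ 2) := by
          apply ENNReal.ofReal_le_ofReal
          have h0 := norm_sub_le w.1 w.2
          have h1 : ‖w.1 - w.2‖ * ‖w.1 - w.2‖ ≤ (‖w.1‖ + ‖w.2‖) * (‖w.1‖ + ‖w.2‖) :=
            mul_le_mul h0 h0 (norm_nonneg _) (by positivity)
          nlinarith [sq_nonneg (‖w.1‖ - ‖w.2‖)]
      _ = 2 * ENNReal.ofReal (‖w.1‖ ^ 2) + 2 * ENNReal.ofReal (‖w.2‖ ^ 2) := by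
          rw [ENNReal.ofReal_add (by positivity) (by positivity),
            ENNReal.ofReal_mul (by norm_num), ENNReal.ofReal_mul (by norm_num)]
          norm_num
  calc ∫⁻ w : Euc d × Euc d, ENNReal.ofReal (‖w.1 - w.2‖ ^ (2:ℝ)) ∂π
      ≤ ∫⁻ w : Euc d × Euc d,
          (2 * ENNReal.ofReal (‖w.1‖ ^ (2:ℝ)) + 2 * ENNReal.ofReal (‖w.2‖ ^ (2:ℝ))) ∂π :=
        lintegral_mono hpt
    _ = 2 * (∫⁻ w : Euc d × Euc d, ENNReal.ofReal (‖w.1‖ ^ (2:ℝ)) ∂π) +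
        2 * (∫⁻ w : Euc d × Euc d, ENNReal.ofReal (‖w.2‖ ^ (2:ℝ)) ∂π) := by
        have m1 : Measurable fun w : Euc d × Euc d => ENNReal.ofReal (‖w.1‖ ^ (2:ℝ)) :=
          hmeas.comp measurable_fst
        have m2 : Measurable fun w : Euc d × Euc d => ENNReal.ofReal (‖w.2‖ ^ (2:ℝ)) :=
          hmeas.comp measurable_snd
        rw [lintegral_add_left (m1.const_mul 2), lintegral_const_mul 2 m1,
          lintegral_const_mul 2 m2]
    _ = _ := by
        rw [← hπ.2.1, ← hπ.2.2, lintegral_map hmeas measurable_fst,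
          lintegral_map hmeas measurable_snd]

/-- for a differentiable `f : ℝ^d → ℝ` with `L`-Lipschitz gradient and Borel
probability measures `μ, ν` with finite second moments,
`∫ f dμ − ∫ f dν ≤ ‖∇f‖_{L²(ν)} · W₂(μ,ν) + (L/2) · W₂(μ,ν)²`. -/
theorem stmt9 {d : ℕ} (f : Euc d → ℝ) (f' : Euc d → Euc d) (L : ℝ)
    (hdiff : ∀ u : Euc d, HasGradientAt f (f' u) u)
    (hL : ∀ u v : Euc d, ‖f' u - f' v‖ ≤ L * ‖u - v‖)
    (μ ν : Measure (Euc d)) [IsProbabilityMeasure μ] [IsProbabilityMeasure ν]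
    (hμ : HasFiniteMoment 2 μ) (hν : HasFiniteMoment 2 ν) :
    (∫ u, f u ∂μ) - ∫ u, f u ∂ν ≤
      (∫ v, ‖f' v‖ ^ 2 ∂ν) ^ ((1 : ℝ) / 2) * wassDist 2 μ ν +
        (L / 2) * (wassDist 2 μ ν) ^ 2 := by
  have hcoupling₀ : IsCoupling (μ.prod ν) μ ν := by
    refine ⟨inferInstance, ?_, ?_⟩
    · rw [Measure.map_fst_prod]; simp
    · rw [Measure.map_snd_prod]; simp
  rcases subsingleton_or_nontrivial (Euc d) with hsub | hnt
  · -- degenerate case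
    have hf0 : f = fun _ => f 0 := funext fun u => by rw [Subsingleton.elim u 0]
    have hμν : ∫ u, f u ∂μ = ∫ u, f u ∂ν := by
      rw [hf0]; simp
    have hW : wassDist 2 μ ν = 0 := by
      unfold wassDist
      have hterm : ∀ π : {π : Measure (Euc d × Euc d) // IsCoupling π μ ν},
          (∫⁻ w, ENNReal.ofReal (‖w.1 - w.2‖ ^ (2:ℝ)) ∂(π.1)) ^ (1 / (2:ℝ)) = 0 := by
        intro π
        have h1 : ∀ w : Euc d × Euc d, ENNReal.ofReal (‖w.1 - w.2‖ ^ (2:ℝ)) = 0 := by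
          intro w
          rw [Subsingleton.elim w.1 w.2]
          simp [Real.zero_rpow (by norm_num : (2:ℝ) ≠ 0)]
        simp only [h1, lintegral_zero]
        exact ENNReal.zero_rpow_of_pos (by norm_num)
      have h0 : (⨅ π : {π : Measure (Euc d × Euc d) // IsCoupling π μ ν},
          (∫⁻ w, ENNReal.ofReal (‖w.1 - w.2‖ ^ (2:ℝ)) ∂(π.1)) ^ (1 / (2:ℝ))) = 0 :=
        le_antisymm (le_trans (iInf_le _ ⟨μ.prod ν, hcoupling₀⟩) (le_of_eq (hterm _)))
          zero_le
      rw [h0]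
      simp
    rw [hμν, hW]
    simp
  -- nontrivial case
  have hL0 : 0 ≤ L := by
    obtain ⟨a, b, hab⟩ := exists_pair_ne (Euc d)
    have h1 : 0 < ‖a - b‖ := by rwa [norm_pos_iff, sub_ne_zero]
    have h2 : (0:ℝ) ≤ L * ‖a - b‖ := le_trans (norm_nonneg _) (hL a b)
    nlinarith
  set A := (∫ v, ‖f' v‖ ^ 2 ∂ν) ^ ((1:ℝ)/2) with hA
  have hA0 : 0 ≤ A := Real.rpow_nonneg (integral_nonneg fun v => by positivity) _
  set W := wassDist 2 μ ν with hWdef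
  have hW0 : 0 ≤ W := ENNReal.toReal_nonneg
  have main : ∀ ε : ℝ, 0 < ε →
      (∫ u, f u ∂μ) - ∫ u, f u ∂ν ≤ A * (W + ε) + L / 2 * (W + ε) ^ 2 := by
    intro ε hε
    set I := ⨅ π : {π : Measure (Euc d × Euc d) // IsCoupling π μ ν},
        (∫⁻ w, ENNReal.ofReal (‖w.1 - w.2‖ ^ (2:ℝ)) ∂(π.1)) ^ (1 / (2:ℝ)) with hIdef
    have hWI : W = I.toReal := rfl
    have hfin₀ : (∫⁻ w : Euc d × Euc d,
        ENNReal.ofReal (‖w.1 - w.2‖ ^ (2:ℝ)) ∂(μ.prod ν)) ≠ ⊤ := by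
      refine ne_of_lt (lt_of_le_of_lt (cost_le μ ν _ hcoupling₀) ?_)
      exact ENNReal.add_lt_top.2 ⟨ENNReal.mul_lt_top (by norm_num) hμ,
        ENNReal.mul_lt_top (by norm_num) hν⟩
    have hIfin : I ≠ ⊤ := by
      refine ne_top_of_le_ne_top ?_ (iInf_le _ ⟨μ.prod ν, hcoupling₀⟩)
      exact (ENNReal.rpow_lt_top_of_nonneg (by norm_num) hfin₀).ne
    have hlt : I < I + ENNReal.ofReal ε :=
      ENNReal.lt_add_right hIfin (ENNReal.ofReal_pos.2 hε).ne'
    rw [hIdef] at hlt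
    obtain ⟨π', hπ'lt⟩ := iInf_lt_iff.1 hlt
    rw [← hIdef] at hπ'lt
    set cost := ∫⁻ w, ENNReal.ofReal (‖w.1 - w.2‖ ^ (2:ℝ)) ∂(π'.1) with hcostdef
    have hRHSne : I + ENNReal.ofReal ε ≠ ⊤ :=
      ENNReal.add_ne_top.2 ⟨hIfin, ENNReal.ofReal_ne_top⟩
    have hcostfin : cost ≠ ⊤ := by
      intro h
      rw [h, ENNReal.top_rpow_of_pos (by norm_num)] at hπ'lt
      exact (hRHSne (top_le_iff.1 hπ'lt.le))
    have hint : Integrable (fun w : Euc d × Euc d => ‖w.1 - w.2‖ ^ 2) π'.1 := by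
      constructor
      · exact ((continuous_fst.sub continuous_snd).norm.pow 2).aestronglyMeasurable
      · rw [hasFiniteIntegral_iff_ofReal (Eventually.of_forall fun w => by positivity)]
        have : (∫⁻ w : Euc d × Euc d, ENNReal.ofReal (‖w.1 - w.2‖ ^ 2) ∂(π'.1)) = cost := by
          rw [hcostdef]
          simp only [rpow_two_eq]
        rw [this]
        exact hcostfin.lt_top
    set c := ∫ w : Euc d × Euc d, ‖w.1 - w.2‖ ^ 2 ∂(π'.1) with hcdef
    have hc0 : 0 ≤ c := integral_nonneg fun w => by positivity
    have hcost_eq : ENNReal.ofReal c = cost := by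
      rw [hcdef, ofReal_integral_eq_lintegral_ofReal hint
        (Eventually.of_forall fun w => by positivity), hcostdef]
      simp only [rpow_two_eq]
    have hcle : c ^ ((1:ℝ)/2) ≤ W + ε := by
      have h1 : cost ^ (1 / (2:ℝ)) ≤ I + ENNReal.ofReal ε := hπ'lt.le
      have h2 := ENNReal.toReal_mono hRHSne h1
      rw [ENNReal.toReal_add hIfin ENNReal.ofReal_ne_top, ENNReal.toReal_ofReal hε.le] at h2
      rw [← ENNReal.toReal_rpow, ← hcost_eq, ENNReal.toReal_ofReal hc0] at h2
      rw [hWI]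
      convert h2 using 2
    have hkey := key_coupling hdiff hL hL0 μ ν hμ hν π'.1 π'.2 hint
    rw [← hcdef, ← hA] at hkey
    refine hkey.trans ?_
    have h3 : (0:ℝ) ≤ c ^ ((1:ℝ)/2) := Real.rpow_nonneg hc0 _
    have h4 : c = (c ^ ((1:ℝ)/2)) ^ 2 := by
      rw [← Real.rpow_natCast (c ^ ((1:ℝ)/2)) 2, ← Real.rpow_mul hc0]
      norm_num
    have h5 : (c ^ ((1:ℝ)/2)) ^ 2 ≤ (W + ε) ^ 2 := pow_le_pow_left₀ h3 hcle 2
    have h6 : A * (c ^ ((1:ℝ)/2)) ≤ A * (W + ε) := mul_le_mul_of_nonneg_left hcle hA0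
    nlinarith [h4, h5, h6, hL0]
  have htend : Tendsto (fun ε : ℝ => A * (W + ε) + L / 2 * (W + ε) ^ 2) (𝓝[>] 0)
      (𝓝 (A * (W + 0) + L / 2 * (W + 0) ^ 2)) := by
    apply Tendsto.mono_left _ nhdsWithin_le_nhds
    exact (Continuous.tendsto (by continuity) 0)
  have hle := ge_of_tendsto htend (eventually_nhdsWithin_of_forall fun ε hε => main ε hε)
  simpa using hle
end
end
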